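/- arXiv:2104.04406 — 2 statements merged into one kernel-verified Lean document; each statement's English description precedes it below -/
import Mathlib

section
/- Let D be a finite nonempty set of points in R^d, q ∈ R^d, c ∈ (0,1), and let o_M ∈ D satisfy ‖o_M‖ = max_{o ∈ D} ‖o‖. Let o* ∈ D be a point maximizing ⟨o,q⟩ over D, with ⟨o*,q⟩ > 0. If some o_i ∈ D satisfies ‖o_M‖² + ‖q‖² − (2/c)⟨o_i,q⟩ ≤ 0, then ⟨o_i,q⟩ ≥ c·⟨o*,q⟩, i.e., o_i is a c-approximate MIP point. -/
open scoped RealInnerProductSpace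

theorem stmt_1 {d : ℕ} (D : Finset (EuclideanSpace ℝ (Fin d)))
    (hD : D.Nonempty) (q : EuclideanSpace ℝ (Fin d)) (c : ℝ)
    (hc : 0 < c) (hc1 : c < 1)
    (oM : EuclideanSpace ℝ (Fin d)) (hoM : oM ∈ D)
    (hoMmax : ∀ o ∈ D, ‖o‖ ≤ ‖oM‖)
    (ostar : EuclideanSpace ℝ (Fin d)) (hostar : ostar ∈ D)
    (hostarmax : ∀ o ∈ D, ⟪o, q⟫ ≤ ⟪ostar, q⟫)
    (hpos : 0 < ⟪ostar, q⟫)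
    (oi : EuclideanSpace ℝ (Fin d)) (hoi : oi ∈ D)
    (hcond : ‖oM‖ ^ 2 + ‖q‖ ^ 2 - (2 / c) * ⟪oi, q⟫ ≤ 0) :
    ⟪oi, q⟫ ≥ c * ⟪ostar, q⟫ := by
  have h1 : ⟪ostar, q⟫ ≤ ‖ostar‖ * ‖q‖ := real_inner_le_norm _ _
  have h2 : ‖ostar‖ * ‖q‖ ≤ ‖oM‖ * ‖q‖ :=
    mul_le_mul_of_nonneg_right (hoMmax _ hostar) (norm_nonneg _)
  have h3 : 2 * ‖oM‖ * ‖q‖ ≤ ‖oM‖ ^ 2 + ‖q‖ ^ 2 := two_mul_le_add_sq _ _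
  have h4 : ‖oM‖ ^ 2 + ‖q‖ ^ 2 ≤ (2 / c) * ⟪oi, q⟫ := by linarith
  have : 2 * ⟪ostar, q⟫ ≤ (2 / c) * ⟪oi, q⟫ := by nlinarith
  have hc' : c ≠ 0 := ne_of_gt hc
  have h5 := mul_le_mul_of_nonneg_left this hc.le
  have h6 : c * (2 / c * ⟪oi, q⟫) = 2 * ⟪oi, q⟫ := by
    rw [← mul_assoc, mul_div_cancel₀ _ hc']
  rw [h6] at h5
  linarith
end

section
/- Let P(o), P(q) ∈ R^m and define binary codes c_i(x) = 1 if x_i ≥ 0 and 0 otherwise, for each coordinate i. Then ‖P(o) − P(q)‖₂ ≥ (1/√m) · Σ_{i=1}^m (c_i(P(o)) XOR c_i(P(q))) · |P_i(q)|. -/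
/-- Sign-based binary code: `1` if `x ≥ 0`, else `0`. -/
noncomputable def signCode (x : ℝ) : ℝ := if 0 ≤ x then 1 else 0

/-- XOR of two 0/1 codes, as a real factor: `1` iff the codes differ. -/
noncomputable def codeXor (a b : ℝ) : ℝ := if a ≠ b then 1 else 0

lemma pointwise_xor_le (a b : ℝ) :
    codeXor (signCode a) (signCode b) * |b| ≤ |a - b| := by
  unfold codeXor signCode
  by_cases ha : 0 ≤ a <;> by_cases hb : 0 ≤ b <;>
    simp only [ha, hb, if_true, if_false, ne_eq, not_true, not_false_iff,
      one_ne_zero, zero_ne_one, ite_true, ite_false, one_mul, zero_mul,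
      not_not]
  · exact abs_nonneg _
  · have hb' : b < 0 := lt_of_not_ge hb
    rw [abs_of_neg hb', abs_of_nonneg (by linarith)]; linarith
  · have ha' : a < 0 := lt_of_not_ge ha
    rw [abs_of_nonneg hb, abs_of_nonpos (by linarith)]; linarith
  · exact abs_nonneg _

lemma l1_le_sqrt_card_mul_norm {m : ℕ} (z : EuclideanSpace ℝ (Fin m)) :
    ∑ i, |z i| ≤ Real.sqrt m * ‖z‖ := by
  have h1 : (∑ i, |z i|) ^ 2 ≤ m * ∑ i, |z i| ^ 2 := by
    simpa using sq_sum_le_card_mul_sum_sq (s := Finset.univ) (f := fun i => |z i|)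
  have hnorm : ‖z‖ ^ 2 = ∑ i, |z i| ^ 2 := by
    rw [EuclideanSpace.norm_eq, Real.sq_sqrt (by positivity)]
    simp [sq_abs]
  have h2 : (∑ i, |z i|) ^ 2 ≤ (Real.sqrt m * ‖z‖) ^ 2 := by
    rw [mul_pow, Real.sq_sqrt (Nat.cast_nonneg m)]
    rw [hnorm]; exact h1
  have hs : (0:ℝ) ≤ ∑ i, |z i| := Finset.sum_nonneg fun i _ => abs_nonneg _
  calc ∑ i, |z i| = Real.sqrt ((∑ i, |z i|) ^ 2) := (Real.sqrt_sq hs).symm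
    _ ≤ Real.sqrt ((Real.sqrt m * ‖z‖) ^ 2) := Real.sqrt_le_sqrt h2
    _ = Real.sqrt m * ‖z‖ := Real.sqrt_sq (by positivity)

theorem stmt_7 {m : ℕ} (Po Pq : EuclideanSpace ℝ (Fin m)) :
    ‖Po - Pq‖ ≥ (1 / Real.sqrt m) *
      ∑ i, codeXor (signCode (Po i)) (signCode (Pq i)) * |Pq i| := by
  rcases Nat.eq_zero_or_pos m with hm | hm
  · subst hm; simp
  have hsum : ∑ i, codeXor (signCode (Po i)) (signCode (Pq i)) * |Pq i|
      ≤ ∑ i, |(Po - Pq) i| := by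
    apply Finset.sum_le_sum
    intro i _
    have := pointwise_xor_le (Po i) (Pq i)
    simpa using this
  have hl1 := l1_le_sqrt_card_mul_norm (Po - Pq)
  have hsqrt : (0:ℝ) < Real.sqrt m := Real.sqrt_pos.2 (by exact_mod_cast hm)
  rw [ge_iff_le, div_mul_eq_mul_div, one_mul, div_le_iff₀ hsqrt, mul_comm]
  linarith
end
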